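/- Frequentist risk of the shrinkage predictor: with X ~ N(θ, σ_p), Y ~ N(θ, σ_f) independent, and q̂(X) = αX + (1−α)η + √(σ_f + α·σ_p)·Φ⁻¹(b̃), the risk E_X E_Y[b(Y−q̂(X))⁺ + h(q̂(X)−Y)⁺] equals (b+h)·√(σ_f + α²·σ_p)·G(c_τ + d_τ·(θ−η), b̃), where c_τ = √((1+α·σ_p)/(1+α²·σ_p))·Φ⁻¹(b̃)·(scaling with σ_f = 1), d_τ = −(1−α)/√(σ_f + α²·σ_p), b̃ = b/(b+h), and G(w,β) = φ(w) + w·Φ(w) − β·w. -/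

import Mathlib

open MeasureTheory ProbabilityTheory

/-- Standard normal density. -/
noncomputable def stdPdf (x : ℝ) : ℝ := Real.exp (-(x ^ 2) / 2) / Real.sqrt (2 * Real.pi)

/-- Standard normal CDF. -/
noncomputable def stdCdf (x : ℝ) : ℝ := ∫ t in Set.Iic x, stdPdf t

/-- Standard normal quantile function. -/
noncomputable def stdQuantile (p : ℝ) : ℝ := Function.invFun stdCdf p

/-- The function `G(w, β) = φ(w) + w Φ(w) - β w`. -/
noncomputable def G (w β : ℝ) : ℝ := stdPdf w + w * stdCdf w - β * w

/-!
The forecast error `W = Y - q̂(X) = Y - α X - const` is a difference of independent Gaussians,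
hence Gaussian with mean `μ = (1 - α)(θ - η) - √(1 + α σ_p) Φ⁻¹(b̃)` and variance
`v = 1 + α² σ_p`, and the risk is `E[b W⁺ + h W⁻]`. Writing `W = μ + √v Z` and
`w = -μ / √v`, this is `√v E[b (Z - w)⁺ + h (w - Z)⁺]`. Since `(Z - w)⁺ = (w - Z)⁺ + Z - w`
and `E[(w - Z)⁺] = φ(w) + w Φ(w)`, it equals
`√v ((b + h)(φ(w) + w Φ(w)) - b w) = (b + h) √v G(w, b̃)`, and `w = c_τ + d_τ (θ - η)`.
-/

open Real Filter Set Topology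
open scoped NNReal

lemma integral_integral_add_eq_integral_conv {M E : Type*} [AddMonoid M] [MeasurableSpace M]
    [MeasurableAdd₂ M] [NormedAddCommGroup E] [NormedSpace ℝ E] {μ ν : Measure M} [SFinite μ]
    [SFinite ν] {f : M → E} (hf : Integrable f (μ ∗ ν)) :
    ∫ x, ∫ y, f (x + y) ∂ν ∂μ = ∫ z, f z ∂(μ ∗ ν) := by
  rw [Measure.conv, integral_map measurable_add.aemeasurable hf.aestronglyMeasurable]
  exact (integral_prod _ (hf.comp_measurable measurable_add)).symm

lemma integral_integral_map_add_eq_integral_conv {X M E : Type*} [MeasurableSpace X] [AddMonoid M]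
    [MeasurableSpace M] [MeasurableAdd₂ M] [NormedAddCommGroup E] [NormedSpace ℝ E]
    {μ : Measure X} {ν : Measure M} [SFinite μ] [SFinite ν] {g : X → M} (hg : Measurable g)
    {f : M → E} (hf : Integrable f (μ.map g ∗ ν)) :
    ∫ x, ∫ y, f (g x + y) ∂ν ∂μ = ∫ z, f z ∂(μ.map g ∗ ν) := by
  rw [← integral_integral_add_eq_integral_conv hf]
  exact (integral_map hg.aemeasurable
    (hf.comp_measurable measurable_add).integral_prod_left.aestronglyMeasurable).symm

lemma stdPdf_eq_gaussianPDFReal : stdPdf = gaussianPDFReal 0 1 := by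
  ext x
  simp [stdPdf, gaussianPDFReal, div_eq_inv_mul]

lemma integrable_stdPdf : Integrable stdPdf :=
  stdPdf_eq_gaussianPDFReal ▸ integrable_gaussianPDFReal 0 1

lemma integral_stdPdf : ∫ x, stdPdf x = 1 :=
  stdPdf_eq_gaussianPDFReal ▸ integral_gaussianPDFReal_eq_one 0 one_ne_zero

lemma integral_gaussianReal_zero_one_eq_integral_stdPdf_mul (f : ℝ → ℝ) :
    ∫ x, f x ∂gaussianReal 0 1 = ∫ x, stdPdf x * f x := by
  rw [integral_gaussianReal_eq_integral_smul one_ne_zero, stdPdf_eq_gaussianPDFReal]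
  rfl

lemma stdPdf_eq_exp_div : stdPdf = fun x => exp (-(1 / 2) * x ^ 2) / √(2 * π) := by
  ext x
  simp only [stdPdf]
  ring_nf

lemma integrable_mul_stdPdf : Integrable fun x => x * stdPdf x := by
  simp_rw [stdPdf_eq_exp_div, ← mul_div_assoc]
  exact (integrable_mul_exp_neg_mul_sq (by norm_num)).div_const _

lemma integral_mul_stdPdf : ∫ x, x * stdPdf x = 0 := by
  have := integral_id_gaussianReal (μ := 0) (v := 1)
  rwa [integral_gaussianReal_zero_one_eq_integral_stdPdf_mul,
    funext fun x => mul_comm (stdPdf x) x] at this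

@[fun_prop]
lemma continuous_stdPdf : Continuous stdPdf := by
  rw [stdPdf_eq_exp_div]
  fun_prop

lemma hasDerivAt_stdPdf (x : ℝ) : HasDerivAt stdPdf (-(x * stdPdf x)) x := by
  have h : HasDerivAt (fun y : ℝ => -(1 / 2) * y ^ 2) (-x) x :=
    ((hasDerivAt_pow 2 x).const_mul _).congr_deriv (by push_cast; ring)
  rw [stdPdf_eq_exp_div]
  exact (h.exp.div_const _).congr_deriv (by ring)

lemma tendsto_stdPdf_atBot : Tendsto stdPdf atBot (𝓝 0) := by
  have h : Tendsto (fun x : ℝ => -(1 / 2) * x ^ 2) atBot atBot :=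
    (((tendsto_pow_atTop two_ne_zero).comp tendsto_neg_atBot_atTop).congr fun x => by
      simp).const_mul_atTop_of_neg (by norm_num)
  rw [stdPdf_eq_exp_div, ← zero_div √(2 * π)]
  exact (tendsto_exp_atBot.comp h).div_const _

lemma setIntegral_Iic_mul_stdPdf (a : ℝ) : ∫ t in Iic a, t * stdPdf t = -stdPdf a := by
  have := integral_Iic_of_hasDerivAt_of_tendsto' (a := a) (fun t _ => hasDerivAt_stdPdf t)
    integrable_mul_stdPdf.fun_neg.integrableOn tendsto_stdPdf_atBot
  rw [integral_neg, sub_zero] at this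
  exact neg_eq_iff_eq_neg.1 this

lemma integrable_max_sub_mul_stdPdf (a : ℝ) : Integrable fun t => max (a - t) 0 * stdPdf t := by
  refine ((integrable_stdPdf.const_mul a).sub integrable_mul_stdPdf).mono
    (by fun_prop) (ae_of_all _ fun t => ?_)
  rw [Pi.sub_apply, ← sub_mul, norm_mul, norm_mul]
  gcongr
  rcases le_total (a - t) 0 with h | h <;> simp [h, abs_of_nonneg, abs_nonneg]

lemma integral_max_sub_mul_stdPdf (a : ℝ) :
    ∫ t, max (a - t) 0 * stdPdf t = stdPdf a + a * stdCdf a := by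
  rw [← setIntegral_eq_integral_of_forall_compl_eq_zero (s := Iic a) fun t ht => by
    rw [max_eq_right (by simp at ht; linarith), zero_mul]]
  rw [setIntegral_congr_fun measurableSet_Iic (g := fun t => a * stdPdf t - t * stdPdf t)
    fun t ht => by rw [max_eq_left (sub_nonneg.2 ht), sub_mul]]
  rw [integral_sub (integrable_stdPdf.const_mul a).integrableOn integrable_mul_stdPdf.integrableOn,
    integral_const_mul, setIntegral_Iic_mul_stdPdf, stdCdf]
  ring

def newsvendorLoss (b h e : ℝ) : ℝ := b * max e 0 + h * max (-e) 0

@[fun_prop]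
lemma continuous_newsvendorLoss (b h : ℝ) : Continuous (newsvendorLoss b h) := by
  unfold newsvendorLoss
  fun_prop

lemma newsvendorLoss_eq (b h e : ℝ) : newsvendorLoss b h e = (b + h) * max (-e) 0 + b * e := by
  rcases le_total e 0 with he | he
  · rw [newsvendorLoss, max_eq_right he, max_eq_left (neg_nonneg.2 he)]
    ring
  · rw [newsvendorLoss, max_eq_left he, max_eq_right (neg_nonpos.2 he)]
    ring

lemma newsvendorLoss_mul {c : ℝ} (hc : 0 ≤ c) (b h e : ℝ) :
    newsvendorLoss b h (c * e) = c * newsvendorLoss b h e := by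
  have hmax (x : ℝ) : max (c * x) 0 = c * max x 0 := by rw [mul_max_of_nonneg _ _ hc, mul_zero]
  simp only [newsvendorLoss, ← mul_neg, hmax]
  ring

lemma integral_newsvendorLoss_sub_mul_stdPdf {b h : ℝ} (hbh : b + h ≠ 0) (w : ℝ) :
    ∫ t, newsvendorLoss b h (t - w) * stdPdf t = (b + h) * G w (b / (b + h)) := by
  have hsplit : (fun t => newsvendorLoss b h (t - w) * stdPdf t) = fun t =>
      ((b + h) * (max (w - t) 0 * stdPdf t) + b * (t * stdPdf t)) + -(b * w) * stdPdf t := by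
    ext t
    rw [newsvendorLoss_eq, neg_sub]
    ring
  have h₁ := (integrable_max_sub_mul_stdPdf w).const_mul (b + h)
  have h₂ := integrable_mul_stdPdf.const_mul b
  rw [hsplit, integral_add (h₁.fun_add h₂) (integrable_stdPdf.const_mul _), integral_add h₁ h₂,
    integral_const_mul, integral_const_mul, integral_const_mul, integral_max_sub_mul_stdPdf,
    integral_mul_stdPdf, integral_stdPdf, G]
  field_simp
  ring

lemma gaussianReal_map_affine (a k μ : ℝ) (v : ℝ≥0) :
    (gaussianReal μ v).map (fun x => a * x + k)
      = gaussianReal (a * μ + k) (.mk (a ^ 2) (sq_nonneg a) * v) := by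
  rw [show (fun x => a * x + k) = (· + k) ∘ (a * ·) from rfl,
    ← Measure.map_map (measurable_add_const k) (measurable_const_mul a),
    gaussianReal_map_const_mul, gaussianReal_map_add_const]

lemma gaussianReal_eq_map_gaussianReal_zero_one (m : ℝ) (v : ℝ≥0) :
    gaussianReal m v = (gaussianReal 0 1).map fun t => √v * t + m := by
  rw [gaussianReal_map_affine, mul_zero, zero_add, mul_one]
  congr
  ext
  simp

lemma integrable_newsvendorLoss_gaussianReal (b h m : ℝ) (v : ℝ≥0) :
    Integrable (newsvendorLoss b h) (gaussianReal m v) := by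
  have hid : Integrable id (gaussianReal m v) := (memLp_id_gaussianReal 1).integrable le_rfl
  exact (hid.pos_part.const_mul b).add (hid.neg.pos_part.const_mul h)

lemma integral_newsvendorLoss_gaussianReal {b h : ℝ} (hbh : b + h ≠ 0) (m : ℝ) {v : ℝ≥0}
    (hv : v ≠ 0) :
    ∫ e, newsvendorLoss b h e ∂gaussianReal m v = (b + h) * √v * G (-m / √v) (b / (b + h)) := by
  have hsv : 0 < √(v : ℝ) := Real.sqrt_pos.2 (NNReal.coe_pos.2 (pos_iff_ne_zero.2 hv))
  have hstd (t : ℝ) : √v * t + m = √v * (t - -m / √v) := by field_simp; ring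
  rw [gaussianReal_eq_map_gaussianReal_zero_one, integral_map (by fun_prop) (by fun_prop),
    integral_gaussianReal_zero_one_eq_integral_stdPdf_mul]
  simp_rw [hstd, newsvendorLoss_mul hsv.le, mul_left_comm (stdPdf _), integral_const_mul,
    mul_comm (stdPdf _), integral_newsvendorLoss_sub_mul_stdPdf hbh]
  ring

theorem stmt18_general (σp : NNReal) (α η θ b h : ℝ)
    (hb : 0 < b) (hh : 0 < h) :
    ∀ bt : ℝ, bt = b / (b + h) →
    ∀ qhat : ℝ → ℝ, (qhat = fun x : ℝ =>
        α * x + (1 - α) * η + Real.sqrt (1 + α * (σp : ℝ)) * stdQuantile bt) →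
    ∀ c d : ℝ,
      c = Real.sqrt ((1 + α * (σp : ℝ)) / (1 + α ^ 2 * (σp : ℝ))) * stdQuantile bt →
      d = -(1 - α) / Real.sqrt (1 + α ^ 2 * (σp : ℝ)) →
    (∫ x, (∫ y, (b * max (y - qhat x) 0 + h * max (qhat x - y) 0) ∂(gaussianReal θ 1))
        ∂(gaussianReal θ σp))
      = (b + h) * Real.sqrt (1 + α ^ 2 * (σp : ℝ)) * G (c + d * (θ - η)) bt := by
  rintro bt rfl qhat rfl c d rfl rfl
  set z := stdQuantile (b / (b + h))
  set k := (1 - α) * η + √(1 + α * σp) * z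
  have hloss (x y : ℝ) : b * max (y - (α * x + (1 - α) * η + √(1 + α * σp) * z)) 0
      + h * max (α * x + (1 - α) * η + √(1 + α * σp) * z - y) 0
      = newsvendorLoss b h ((-α) * x + -k + y) := by
    simp only [newsvendorLoss, k]
    ring_nf
  have hlaw : (gaussianReal θ σp).map (fun x => -α * x + -k) ∗ gaussianReal θ 1
      = gaussianReal (-α * θ + -k + θ) (.mk ((-α) ^ 2) (sq_nonneg _) * σp + 1) := by
    rw [gaussianReal_map_affine, gaussianReal_conv_gaussianReal]
  simp_rw [hloss]
  rw [integral_integral_map_add_eq_integral_conv (by fun_prop)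
      (hlaw ▸ integrable_newsvendorLoss_gaussianReal _ _ _ _), hlaw,
    integral_newsvendorLoss_gaussianReal (by positivity) _ (by positivity)]
  rw [show ((.mk ((-α) ^ 2) (sq_nonneg _) * σp + 1 : ℝ≥0) : ℝ) = 1 + α ^ 2 * σp by
    push_cast; ring]
  congr 2
  rw [Real.sqrt_div' _ (by positivity)]
  field_simp
  ring

theorem stmt18 (σp : NNReal) (hσp : 0 < σp) (α η θ b h : ℝ)
    (hα : α ∈ Set.Icc (0 : ℝ) 1) (hb : 0 < b) (hh : 0 < h) :
    ∀ bt : ℝ, bt = b / (b + h) →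
    ∀ qhat : ℝ → ℝ, (qhat = fun x : ℝ =>
        α * x + (1 - α) * η + Real.sqrt (1 + α * (σp : ℝ)) * stdQuantile bt) →
    ∀ c d : ℝ,
      c = Real.sqrt ((1 + α * (σp : ℝ)) / (1 + α ^ 2 * (σp : ℝ))) * stdQuantile bt →
      d = -(1 - α) / Real.sqrt (1 + α ^ 2 * (σp : ℝ)) →
    (∫ x, (∫ y, (b * max (y - qhat x) 0 + h * max (qhat x - y) 0) ∂(gaussianReal θ 1))
        ∂(gaussianReal θ σp))
      = (b + h) * Real.sqrt (1 + α ^ 2 * (σp : ℝ)) * G (c + d * (θ - η)) bt :=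
  stmt18_general σp α η θ b h hb hh
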